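/- arXiv:2107.06761 — 6 statements merged into one kernel-verified Lean document; each statement's English description precedes it below -/
import Mathlib

section
/- Let A be a commutative ring with finitely many minimal primes, and let U ⊆ Spec(A) be a dense open subset. Then U contains a dense open subset of the form D(g) for some g ∈ A. -/
/-!
A dense open subset of a space with finitely many irreducible components contains the generic
point of each component; for `Spec A` these are the minimal primes. So the vanishing ideal of
`Uᶜ` lies in no minimal prime, and prime avoidance yields `g` in it outside every minimal prime:
then `D(g) ⊆ U`, and `D(g)` is dense because it contains all generic points.
-/

open Topology

theorem genericPoints_subset_of_dense_of_isOpen {X : Type*} [TopologicalSpace X]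
    (hX : (irreducibleComponents X).Finite) {U : Set X} (hU : IsOpen U) (hd : Dense U) :
    genericPoints X ⊆ U := by
  intro x hx
  -- the points lying on no component other than `closure {x}` form an open set dense in it
  have hW : IsOpen (⋃₀ (irreducibleComponents X \ {closure {x}}))ᶜ :=
    isOpen_compl_iff.2 <| Set.sUnion_eq_biUnion ▸ hX.sdiff.isClosed_biUnion fun Y hY ↦
      isClosed_of_mem_irreducibleComponents Y hY.1
  have hWx := closure_sUnion_irreducibleComponents_sdiff_singleton hX _ hx
  have hWne : (⋃₀ (irreducibleComponents X \ {closure {x}}))ᶜ.Nonempty := by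
    rw [← closure_nonempty_iff, hWx]
    exact isIrreducible_singleton.closure.nonempty
  obtain ⟨y, hyW, hyU⟩ := hd.inter_open_nonempty _ hW hWne
  have hxy : x ⤳ y := specializes_iff_mem_closure.2 (hWx ▸ subset_closure hyW)
  exact hxy.mem_open hU hyU

theorem dense_of_genericPoints_subset {X : Type*} [TopologicalSpace X] [QuasiSober X]
    {S : Set X} (hS : genericPoints X ⊆ S) : Dense S := by
  rw [dense_iff_closure_eq, ← Set.univ_subset_iff, ← genericPoints.closure]
  exact closure_mono hS

namespace PrimeSpectrum

variable {A : Type*} [CommRing A]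

theorem mem_genericPoints_iff {x : PrimeSpectrum A} :
    x ∈ genericPoints (PrimeSpectrum A) ↔ x.asIdeal ∈ minimalPrimes A := by
  rw [← vanishingIdeal_singleton, vanishingIdeal_mem_minimalPrimes]
  rfl

theorem finite_irreducibleComponents (hfin : (minimalPrimes A).Finite) :
    (irreducibleComponents (PrimeSpectrum A)).Finite :=
  zeroLocus_minimalPrimes A ▸ hfin.image _

theorem exists_mem_forall_notMem_minimalPrimes (hfin : (minimalPrimes A).Finite) {I : Ideal A}
    (hI : ∀ p ∈ minimalPrimes A, ¬I ≤ p) : ∃ g ∈ I, ∀ p ∈ minimalPrimes A, g ∉ p := by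
  have := (Ideal.subset_union_prime_finite hfin (f := id) ⊥ ⊥
    (fun p hp _ _ ↦ hp.1.1) (I := I)).not.2 (by simpa using hI)
  simpa [Set.not_subset] using this

end PrimeSpectrum

open PrimeSpectrum

/-- Let `A` be a commutative ring with finitely many minimal primes and `U ⊆ Spec A`
a dense open subset. Then `U` contains a dense open of the form `D(g)`. -/
theorem stmt_2 {A : Type*} [CommRing A] (hfin : (minimalPrimes A).Finite)
    (U : Set (PrimeSpectrum A)) (hUopen : IsOpen U) (hUdense : Dense U) :
    ∃ g : A, (PrimeSpectrum.basicOpen g : Set (PrimeSpectrum A)) ⊆ U ∧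
      Dense (PrimeSpectrum.basicOpen g : Set (PrimeSpectrum A)) := by
  have hgen : genericPoints (PrimeSpectrum A) ⊆ U :=
    genericPoints_subset_of_dense_of_isOpen (finite_irreducibleComponents hfin) hUopen hUdense
  have hZ : zeroLocus (vanishingIdeal Uᶜ : Set A) = Uᶜ := by
    rw [zeroLocus_vanishingIdeal_eq_closure, hUopen.isClosed_compl.closure_eq]
  have hI : ∀ p ∈ minimalPrimes A, ¬vanishingIdeal Uᶜ ≤ p := fun p hp hle ↦
    (hZ ▸ hle : (⟨p, hp.1.1⟩ : PrimeSpectrum A) ∈ Uᶜ) (hgen (mem_genericPoints_iff.2 hp))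
  obtain ⟨g, hgU, hg⟩ := exists_mem_forall_notMem_minimalPrimes hfin hI
  refine ⟨g, fun x hx ↦ ?_, dense_of_genericPoints_subset fun x hx ↦ ?_⟩
  · by_contra hxU
    exact hx ((mem_vanishingIdeal _ _).1 hgU x hxU)
  · exact hg _ (mem_genericPoints_iff.1 hx)
end

section
/- Let V ⊆ V' be a finite étale ring extension where V and V' are local normal domains, the inclusion is a local homomorphism, and V is a Henselian valuation ring. Then V' is a valuation ring. -/
/-!
Scale a polynomial relation `∑ cᵢ xⁱ = 0` over the valuation ring `V`, for `x` in the fraction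
field of `V'`, so that some coefficient `c_j` equals `1` (divide by a coefficient of least
valuation). The tails `e_m = ∑_{i ≥ m} cᵢ x^(i-m)` lie in `V[x]`, and also in `V[x⁻¹]` because
`e_0 = 0` and `x e_{m+1} = e_m - c_m`; elements of `V[x] ∩ V[x⁻¹]` are integral over `V`, so the
`e_m` lie in the integrally closed ring `V'`. Since `e_j - x e_{j+1} = 1` and `V'` is local, either
`e_j` is a unit and `x = x e_j / e_j ∈ V'`, or `x e_{j+1}` is a unit and
`x⁻¹ = e_{j+1} / (x e_{j+1}) ∈ V'`.
-/

universe u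

open Polynomial

theorem Polynomial.coeff_iterate_divX {R : Type*} [Semiring R] (p : R[X]) (m n : ℕ) :
    (divX^[m] p).coeff n = p.coeff (n + m) := by
  induction m generalizing n with
  | zero => rfl
  | succ m ih => rw [Function.iterate_succ_apply', coeff_divX, ih, add_right_comm, add_assoc]

theorem Polynomial.aeval_iterate_divX {R S : Type*} [CommSemiring R] [CommSemiring S]
    [Algebra R S] (x : S) (p : R[X]) (m : ℕ) :
    aeval x (divX^[m] p) = algebraMap R S (p.coeff m) + x * aeval x (divX^[m + 1] p) := by
  conv_lhs => rw [← divX_mul_X_add (divX^[m] p)]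
  rw [coeff_iterate_divX, zero_add, Function.iterate_succ_apply', map_add, map_mul, aeval_X,
    aeval_C, add_comm, mul_comm]

theorem ValuationRing.exists_coeff_dvd {V : Type*} [CommRing V] [IsDomain V] [ValuationRing V]
    {f : V[X]} (hf : f ≠ 0) : ∃ j, f.coeff j ≠ 0 ∧ ∀ i, f.coeff j ∣ f.coeff i := by
  obtain ⟨j, hj, hmax⟩ := f.support.exists_maximalFor (fun i => Ideal.span {f.coeff i})
    (nonempty_support_iff.2 hf)
  refine ⟨j, mem_support_iff.1 hj, fun i => ?_⟩
  by_cases hi : i ∈ f.support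
  · rw [← Ideal.span_singleton_le_span_singleton]
    exact (total_of (· ≤ ·) _ _).elim id (hmax hi)
  · rw [notMem_support_iff.1 hi]
    exact dvd_zero _

theorem ValuationRing.exists_aeval_eq_zero_coeff_eq_one {V L : Type*} [CommRing V] [IsDomain V]
    [ValuationRing V] [CommRing L] [Algebra V L] [Module.IsTorsionFree V L] {x : L}
    (hx : IsAlgebraic V x) : ∃ g : V[X], aeval x g = 0 ∧ ∃ j, g.coeff j = 1 := by
  obtain ⟨f, hf, hfx⟩ := hx
  obtain ⟨j, hj, hdvd⟩ := exists_coeff_dvd hf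
  obtain ⟨g, hfg⟩ := (C_dvd_iff_dvd_coeff _ f).2 hdvd
  refine ⟨g, ?_, j, ?_⟩
  · rw [hfg, map_mul, aeval_C, ← Algebra.smul_def] at hfx
    exact (smul_eq_zero.1 hfx).resolve_left hj
  · have hcoeff := congr_arg (coeff · j) hfg
    simp only [coeff_C_mul] at hcoeff
    exact (mul_right_eq_self₀.1 hcoeff.symm).resolve_right hj

section Laurent

variable {V L : Type*} [CommRing V] [Field L] [Algebra V L]

theorem aeval_mul_zpow_mem_span {x : L} (hx : x ≠ 0) {p : V[X]} {N : ℕ}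
    (hp : p.natDegree ≤ N) {k : ℤ} (hk₁ : -N ≤ k) (hk₂ : k ≤ 0) :
    aeval x p * x ^ k ∈ Submodule.span V ((x ^ ·) '' Set.Icc (-N : ℤ) N) := by
  rw [aeval_eq_sum_range, Finset.sum_mul]
  refine Submodule.sum_mem _ fun i hi => ?_
  have hi := Finset.mem_range.1 hi
  rw [smul_mul_assoc, ← zpow_natCast, ← zpow_add₀ hx]
  exact Submodule.smul_mem _ _ (Submodule.subset_span ⟨_, ⟨by omega, by omega⟩, rfl⟩)

theorem span_inv_zpow_Icc (x : L) (N : ℕ) :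
    Submodule.span V ((x⁻¹ ^ ·) '' Set.Icc (-N : ℤ) N) =
      Submodule.span V ((x ^ ·) '' Set.Icc (-N : ℤ) N) := by
  congr 1
  ext y
  constructor <;> rintro ⟨k, hk, rfl⟩ <;>
    exact ⟨-k, ⟨by linarith [hk.2], by linarith [hk.1]⟩, by simp [inv_zpow']⟩

theorem isIntegral_of_mem_adjoin_of_mem_adjoin_inv {x z : L} (hx : x ≠ 0)
    (h : z ∈ Algebra.adjoin V {x}) (h' : z ∈ Algebra.adjoin V {x⁻¹}) : IsIntegral V z := by
  rw [Algebra.adjoin_singleton_eq_range_aeval] at h h'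
  obtain ⟨p, rfl⟩ := h
  obtain ⟨q, hq : aeval x⁻¹ q = aeval x p⟩ := h'
  set N := max p.natDegree q.natDegree
  set M := Submodule.span V ((x ^ ·) '' Set.Icc (-N : ℤ) N)
  have hM : M ≤ M.comap (LinearMap.mulLeft V (aeval x p)) := by
    refine Submodule.span_le.2 ?_
    rintro _ ⟨k, hk, rfl⟩
    change aeval x p * x ^ k ∈ M
    rcases le_or_gt k 0 with hk₀ | hk₀
    · exact aeval_mul_zpow_mem_span hx (le_max_left _ _) hk.1 hk₀
    · have := aeval_mul_zpow_mem_span (inv_ne_zero hx) (le_max_right p.natDegree _)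
        (k := -k) (by linarith [hk.2]) (by linarith)
      rwa [span_inv_zpow_Icc, inv_zpow', neg_neg, hq] at this
  have hM₀ : M ≠ ⊥ := (Submodule.ne_bot_iff M).2
    ⟨1, Submodule.subset_span ⟨0, ⟨by simp, by simp⟩, zpow_zero x⟩, one_ne_zero⟩
  exact isIntegral_of_smul_mem_submodule M hM₀ (Submodule.fg_span ((Set.finite_Icc _ _).image _))
    _ fun w hw => hM hw

-- `aeval x (divX^[m] g)` is the tail `∑_{i ≥ m} gᵢ x^(i-m)` of `g(x)`.
theorem mul_aeval_iterate_divX_mem_adjoin_inv {x : L} (hx : x ≠ 0) {g : V[X]}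
    (hg : aeval x g = 0) (m : ℕ) : x * aeval x (divX^[m] g) ∈ Algebra.adjoin V {x⁻¹} := by
  induction m with
  | zero => simp [hg]
  | succ m ih =>
    have hrec : x * aeval x (divX^[m + 1] g) =
        x⁻¹ * (x * aeval x (divX^[m] g)) - algebraMap V L (g.coeff m) := by
      rw [inv_mul_cancel_left₀ hx, aeval_iterate_divX x g m, add_sub_cancel_left]
    rw [hrec]
    exact sub_mem (mul_mem (Algebra.self_mem_adjoin_singleton V _) ih)
      (Subalgebra.algebraMap_mem _ _)

theorem isIntegral_aeval_iterate_divX {x : L} (hx : x ≠ 0) {g : V[X]} (hg : aeval x g = 0)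
    (m : ℕ) : IsIntegral V (aeval x (divX^[m] g)) ∧ IsIntegral V (x * aeval x (divX^[m] g)) := by
  have hinv := mul_aeval_iterate_divX_mem_adjoin_inv hx hg m
  refine ⟨isIntegral_of_mem_adjoin_of_mem_adjoin_inv hx (aeval_mem_adjoin_singleton V x) ?_,
    isIntegral_of_mem_adjoin_of_mem_adjoin_inv hx
      (mul_mem (Algebra.self_mem_adjoin_singleton V x) (aeval_mem_adjoin_singleton V x)) hinv⟩
  rw [← inv_mul_cancel_left₀ hx (aeval x _)]
  exact mul_mem (Algebra.self_mem_adjoin_singleton V _) hinv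

end Laurent

theorem IsLocalization.isInteger_of_mul_algebraMap_eq {R K : Type*} [CommRing R] [CommRing K]
    [Algebra R K] {y : K} {u w : R} (hu : IsUnit u) (h : y * algebraMap R K u = algebraMap R K w) :
    IsLocalization.IsInteger R y :=
  ⟨w * ↑hu.unit⁻¹, by rw [map_mul, ← h, mul_assoc, ← map_mul, hu.mul_val_inv, map_one, mul_one]⟩

theorem IsLocalRing.isInteger_or_isInteger_inv_of_aeval_eq_zero {V R K : Type*} [CommRing V]
    [CommRing R] [IsDomain R] [IsLocalRing R] [IsIntegrallyClosed R] [Field K] [Algebra R K]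
    [IsFractionRing R K] [Algebra V R] [Algebra V K] [IsScalarTower V R K] {x : K} {g : V[X]}
    (hg : aeval x g = 0) {j : ℕ} (hj : g.coeff j = 1) :
    IsLocalization.IsInteger R x ∨ IsLocalization.IsInteger R x⁻¹ := by
  rcases eq_or_ne x 0 with rfl | hx
  · exact Or.inl ⟨0, map_zero _⟩
  have lift : ∀ z : K, IsIntegral V z → ∃ r : R, algebraMap R K r = z := fun z hz =>
    IsIntegrallyClosed.isIntegral_iff.1 (hz.tower_top (A := R))
  obtain ⟨p, hp⟩ := lift _ (isIntegral_aeval_iterate_divX hx hg j).1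
  obtain ⟨p', hp'⟩ := lift _ (isIntegral_aeval_iterate_divX hx hg j).2
  obtain ⟨q, hq⟩ := lift _ (isIntegral_aeval_iterate_divX hx hg (j + 1)).1
  have hrec := aeval_iterate_divX x g j
  rw [hj, map_one] at hrec
  rcases IsLocalRing.isUnit_or_isUnit_one_sub_self p with hu | hu
  · exact Or.inl (IsLocalization.isInteger_of_mul_algebraMap_eq (w := p') hu (by rw [hp, hp']))
  · refine Or.inr (IsLocalization.isInteger_of_mul_algebraMap_eq (w := -q) hu ?_)
    rw [map_sub, map_one, hp, hrec, map_neg, hq, sub_add_cancel_left, mul_neg,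
      inv_mul_cancel_left₀ hx]

theorem ValuationRing.of_isIntegral {V R : Type*} [CommRing V] [IsDomain V] [ValuationRing V]
    [CommRing R] [IsDomain R] [IsLocalRing R] [IsIntegrallyClosed R] [Algebra V R]
    [Algebra.IsIntegral V R] (hinj : Function.Injective (algebraMap V R)) : ValuationRing R := by
  let K := FractionRing R
  have : Module.IsTorsionFree V K := by
    rw [Module.isTorsionFree_iff_algebraMap_injective, IsScalarTower.algebraMap_eq V R K]
    exact (IsFractionRing.injective R K).comp hinj
  have : Algebra.IsAlgebraic V K := (IsFractionRing.isAlgebraic_iff' V R K).1 inferInstance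
  refine (iff_isInteger_or_isInteger R K).2 fun x => ?_
  obtain ⟨g, hg, j, hj⟩ :=
    exists_aeval_eq_zero_coeff_eq_one (Algebra.IsAlgebraic.isAlgebraic (R := V) x)
  exact IsLocalRing.isInteger_or_isInteger_inv_of_aeval_eq_zero hg hj

theorem stmt_3_general {V V' : Type u} [CommRing V] [IsDomain V] [ValuationRing V]
    [CommRing V'] [IsDomain V'] [IsLocalRing V']
    [IsIntegrallyClosed V'] [Algebra V V']
    (hinj : Function.Injective (algebraMap V V'))
    [Module.Finite V V'] :
    ValuationRing V' := by
  have : Algebra.IsIntegral V V' := Algebra.IsIntegral.of_finite V V'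
  exact ValuationRing.of_isIntegral hinj

/-- Let `V ⊆ V'` be a finite étale ring extension where `V` and `V'` are local normal
domains, the inclusion is a local homomorphism, and `V` is a Henselian valuation ring.
Then `V'` is a valuation ring. -/
theorem stmt_3 {V V' : Type u} [CommRing V] [IsDomain V] [ValuationRing V]
    [HenselianLocalRing V] [CommRing V'] [IsDomain V'] [IsLocalRing V']
    [IsIntegrallyClosed V'] [Algebra V V']
    (hinj : Function.Injective (algebraMap V V'))
    (hloc : IsLocalHom (algebraMap V V'))
    [Module.Finite V V'] [Algebra.Etale V V'] :
    ValuationRing V' :=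
  stmt_3_general hinj
end

section
/- Let A be an 𝒪_K-torsion-free algebra over a valuation ring 𝒪_K of a non-archimedean field, and let ϖ', ϖ'' be nonzero elements of the maximal ideal with ϖ = ϖ'·ϖ''. If Spec(A/ϖ'A) and Spec(A/ϖ''A) both satisfy the condition (S₁') — every element killed by a non-minimal-prime-avoiding element is zero — then so does Spec(A/ϖA). -/
/-- Condition (S₁') for an affine scheme `Spec R`: every element of `R` killed by an
element avoiding all minimal primes is zero. -/
def SOnePrime (R : Type*) [CommRing R] : Prop :=
  ∀ g : R, (∀ p ∈ minimalPrimes R, g ∉ p) → ∀ f : R, g * f = 0 → f = 0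

/-!
By the valuation-ring property we may assume `ϖ'' = ϖ' c`; put `a = ϖ'`, `b = ϖ''`.
Torsion-freeness makes `b` and `c` regular in `A`. As `(ab)` and `(b)` have the same radical,
they have the same minimal primes, so (S₁') modulo `b` applies to every `G` avoiding the
minimal primes over `(ab)`. If `ab ∣ GF`, then `F = bH`, and cancelling `b` gives `a ∣ GH`;
hence `b ∣ G(cH)`, so `b ∣ cH`, and cancelling `c` gives `a ∣ H`, i.e. `ab ∣ F`.
-/

namespace Ideal

variable {A : Type*} [CommRing A]

def SOnePrime (I : Ideal A) : Prop :=
  ∀ g : A, (∀ p ∈ I.minimalPrimes, g ∉ p) → ∀ f : A, g * f ∈ I → f ∈ I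

theorem sOnePrime_quotient_iff (I : Ideal A) : _root_.SOnePrime (A ⧸ I) ↔ I.SOnePrime := by
  have avoids_iff (g : A) :
      (∀ p ∈ minimalPrimes (A ⧸ I), Quotient.mk I g ∉ p) ↔ ∀ P ∈ I.minimalPrimes, g ∉ P := by
    simp only [minimalPrimes_eq_comap, Set.mem_image, forall_exists_index, and_imp,
      forall_apply_eq_imp_iff₂, mem_comap]
  constructor
  · intro h g hg f hgf
    rw [← Quotient.eq_zero_iff_mem] at hgf ⊢
    exact h _ ((avoids_iff g).mpr hg) _ (by rwa [← map_mul])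
  · intro h g hg f hgf
    obtain ⟨g, rfl⟩ := Quotient.mk_surjective g
    obtain ⟨f, rfl⟩ := Quotient.mk_surjective f
    rw [← map_mul, Quotient.eq_zero_iff_mem] at hgf
    exact Quotient.eq_zero_iff_mem.mpr (h g ((avoids_iff g).mp hg) f hgf)

theorem radical_span_singleton_mul_self_mul (x y : A) :
    (span {x * (x * y)}).radical = (span {x * y}).radical := by
  refine le_antisymm (radical_mono ?_) (radical_le_radical_iff.mpr ?_)
  · exact span_singleton_le_span_singleton.mpr (dvd_mul_left _ _)
  · rw [span_singleton_le_iff_mem]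
    exact ⟨2, mem_span_singleton.mpr ⟨y, by ring⟩⟩

theorem minimalPrimes_span_singleton_mul_self_mul (x y : A) :
    (span {x * (x * y)}).minimalPrimes = (span {x * y}).minimalPrimes := by
  rw [← radical_minimalPrimes, radical_span_singleton_mul_self_mul, radical_minimalPrimes]

theorem SOnePrime.span_singleton_mul_self_mul {x y : A} (hxy : x * y ∈ nonZeroDivisors A)
    (h : (span {x * y}).SOnePrime) : (span {x * (x * y)}).SOnePrime := by
  have hy : y ∈ nonZeroDivisors A := (mul_mem_nonZeroDivisors.mp hxy).2
  intro g hg f hgf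
  rw [minimalPrimes_span_singleton_mul_self_mul] at hg
  simp only [SOnePrime, mem_span_singleton] at h hgf ⊢
  obtain ⟨k, rfl⟩ : x * y ∣ f := h g hg f ((dvd_mul_left _ _).trans hgf)
  have hx_gk : x ∣ g * k := by
    rw [← dvd_cancel_left_mem_nonZeroDivisors hxy]
    simpa only [mul_comm x, mul_left_comm g] using hgf
  have hxy_yk : x * y ∣ y * k := by
    refine h g hg _ ?_
    simpa only [mul_comm x y, mul_left_comm g y] using mul_dvd_mul_left y hx_gk
  rw [mul_comm x y, dvd_cancel_left_mem_nonZeroDivisors hy] at hxy_yk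
  simpa only [mul_comm x (x * y)] using mul_dvd_mul_left (x * y) hxy_yk

end Ideal

theorem algebraMap_mem_nonZeroDivisors_of_smul_eq_zero {O A : Type*} [CommRing O]
    [CommRing A] [Algebra O A] (htf : ∀ c : O, c ≠ 0 → ∀ a : A, c • a = 0 → a = 0)
    {c : O} (hc : c ≠ 0) : algebraMap O A c ∈ nonZeroDivisors A :=
  mem_nonZeroDivisors_iff_left.mpr fun a ha => htf c hc a (by rwa [Algebra.smul_def])

theorem stmt_11_general {O A : Type*} [CommRing O] [IsDomain O] [ValuationRing O]
    [CommRing A] [Algebra O A]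
    (htf : ∀ c : O, c ≠ 0 → ∀ a : A, c • a = 0 → a = 0)
    (ϖ' ϖ'' ϖ : O)
    (hϖ'0 : ϖ' ≠ 0) (hϖ''0 : ϖ'' ≠ 0) (hϖ : ϖ = ϖ' * ϖ'')
    (h1 : SOnePrime (A ⧸ Ideal.span {algebraMap O A ϖ'}))
    (h2 : SOnePrime (A ⧸ Ideal.span {algebraMap O A ϖ''})) :
    SOnePrime (A ⧸ Ideal.span {algebraMap O A ϖ}) := by
  subst hϖ
  rw [Ideal.sOnePrime_quotient_iff] at h1 h2 ⊢
  obtain ⟨c, rfl | rfl⟩ := ValuationRing.cond ϖ' ϖ''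
  · have hreg := algebraMap_mem_nonZeroDivisors_of_smul_eq_zero htf hϖ''0
    rw [map_mul] at h2 hreg
    rw [map_mul, map_mul]
    exact h2.span_singleton_mul_self_mul hreg
  · have hreg := algebraMap_mem_nonZeroDivisors_of_smul_eq_zero htf hϖ'0
    rw [map_mul] at h1 hreg
    rw [map_mul, map_mul, mul_comm]
    exact h1.span_singleton_mul_self_mul hreg

/-- Let `A` be a torsion-free algebra over a valuation ring `𝒪_K`, and `ϖ', ϖ''` nonzero
elements of the maximal ideal with `ϖ = ϖ'·ϖ''`. If `Spec (A/ϖ'A)` and `Spec (A/ϖ''A)`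
satisfy (S₁'), then so does `Spec (A/ϖA)`. -/
theorem stmt_11 {O A : Type*} [CommRing O] [IsDomain O] [ValuationRing O]
    [CommRing A] [Algebra O A]
    (htf : ∀ c : O, c ≠ 0 → ∀ a : A, c • a = 0 → a = 0)
    (ϖ' ϖ'' ϖ : O)
    (hϖ' : ϖ' ∈ IsLocalRing.maximalIdeal O) (hϖ'' : ϖ'' ∈ IsLocalRing.maximalIdeal O)
    (hϖ'0 : ϖ' ≠ 0) (hϖ''0 : ϖ'' ≠ 0) (hϖ : ϖ = ϖ' * ϖ'')
    (h1 : SOnePrime (A ⧸ Ideal.span {algebraMap O A ϖ'}))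
    (h2 : SOnePrime (A ⧸ Ideal.span {algebraMap O A ϖ''})) :
    SOnePrime (A ⧸ Ideal.span {algebraMap O A ϖ}) :=
  stmt_11_general htf ϖ' ϖ'' ϖ hϖ'0 hϖ''0 hϖ h1 h2
end

section
/- Let X be a locally topologically Noetherian scheme and X = ⋃ U_i an open cover. Then X satisfies (S₁') if and only if each U_i satisfies (S₁'). Moreover, if X satisfies (S₁') then every open subscheme of X satisfies (S₁'). -/
open AlgebraicGeometry CategoryTheory TopologicalSpace

/-- A scheme `X` satisfies condition (S₁') if every dense open subscheme `U ⊆ X` is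
schematically dense, i.e. `𝒪_X → j_* 𝒪_U` is injective, i.e. for every open `V` the
restriction `𝒪_X(V) → 𝒪_X(U ⊓ V)` is injective. -/
def SchemeSOnePrime (X : Scheme) : Prop :=
  ∀ U : X.Opens, Dense (U : Set X) →
    ∀ V : X.Opens,
      Function.Injective (X.presheaf.map (homOfLE (inf_le_right : U ⊓ V ≤ V)).op)

/-! Both directions reduce to injectivity of restriction maps of `𝒪_X`. If `W` is dense in an
open `V`, then `W ∪ (X ∖ closure V)` is a dense open of `X` meeting `V` in `W`, so (S₁') passes
to `V`. Conversely, injectivity of `𝒪_X(V) → 𝒪_X(U ⊓ V)` is local on `X` by the sheaf axiom,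
and a dense open `U` of `X` meets each `Uᵢ` in a dense open of `Uᵢ`. -/

theorem dense_union_compl_closure {α : Type*} [TopologicalSpace α] {s t : Set α}
    (hst : s ⊆ closure t) : Dense (t ∪ (closure s)ᶜ) := by
  refine dense_iff_closure_eq.mpr (Set.eq_univ_of_univ_subset ?_)
  calc Set.univ = closure s ∪ (closure s)ᶜ := (Set.union_compl_self _).symm
    _ ⊆ closure t ∪ (closure s)ᶜ :=
        Set.union_subset_union_left _ (closure_minimal hst isClosed_closure)
    _ ⊆ closure (t ∪ (closure s)ᶜ) :=
        Set.union_subset (closure_mono Set.subset_union_left)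
          (Set.subset_union_right.trans subset_closure)

namespace AlgebraicGeometry.Scheme

variable {X : Scheme}

theorem injective_presheaf_map_of_eq {A B A' B' : X.Opens} (hA : A' = A) (hB : B' = B)
    (f : Opposite.op B ⟶ Opposite.op A) (g : Opposite.op B' ⟶ Opposite.op A')
    (h : Function.Injective (X.presheaf.map g)) :
    Function.Injective (X.presheaf.map f) := by
  subst hA hB
  rwa [Subsingleton.elim f g]

theorem Opens.injective_toScheme_presheaf_map_iff (V : X.Opens) {A B : V.toScheme.Opens}
    (h : A ≤ B) :
    Function.Injective (V.toScheme.presheaf.map (homOfLE h).op) ↔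
      Function.Injective (X.presheaf.map (homOfLE (V.ι.image_mono h)).op) :=
  Iff.rfl

theorem Opens.ι_image_preimage (V U : X.Opens) : V.ι ''ᵁ (V.ι ⁻¹ᵁ U) = V ⊓ U := by
  rw [Hom.image_preimage_eq_opensRange_inf, Opens.opensRange_ι]

theorem injective_presheaf_map_of_iSup_eq_top {ι : Type*} (𝒰 : ι → X.Opens)
    (hcov : iSup 𝒰 = ⊤) {W V : X.Opens} (hWV : W ≤ V)
    (h : ∀ i, Function.Injective (X.presheaf.map (homOfLE (inf_le_inf_left (𝒰 i) hWV)).op)) :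
    Function.Injective (X.presheaf.map (homOfLE hWV).op) := by
  intro a b hab
  refine X.sheaf.eq_of_locally_eq' (fun i => 𝒰 i ⊓ V) V (fun _ => homOfLE inf_le_right) ?_ a b
    fun i => h i ?_
  · rw [← iSup_inf_eq, hcov, top_inf_eq]
  · have hres : ∀ c, X.presheaf.map (homOfLE (inf_le_inf_left (𝒰 i) hWV)).op
        (X.presheaf.map (homOfLE (inf_le_right : 𝒰 i ⊓ V ≤ V)).op c) =
        X.presheaf.map (homOfLE (inf_le_right : 𝒰 i ⊓ W ≤ W)).op
          (X.presheaf.map (homOfLE hWV).op c) := fun c => by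
      rw [← CategoryTheory.comp_apply, ← CategoryTheory.comp_apply, ← X.presheaf.map_comp,
        ← X.presheaf.map_comp]
      rfl
    exact (hres a).trans ((congrArg _ hab).trans (hres b).symm)

end AlgebraicGeometry.Scheme

open Scheme in
theorem SchemeSOnePrime.restrict {X : Scheme} (hX : SchemeSOnePrime X) (V : X.Opens) :
    SchemeSOnePrime V.toScheme := by
  intro W hW O
  have hVW : (V : Set X) ⊆ closure (V.ι ''ᵁ W) := fun x hx =>
    V.ι.isOpenEmbedding.isInducing.dense_iff.mp hW ⟨x, hx⟩
  let D : X.Opens := V.ι ''ᵁ W ⊔ ⟨(closure (V : Set X))ᶜ, isClosed_closure.isOpen_compl⟩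
  have hDO : D ⊓ V.ι ''ᵁ O = V.ι ''ᵁ (W ⊓ O) := by
    have hOV : (V.ι ''ᵁ O : Set X) ⊆ closure V :=
      (SetLike.coe_subset_coe.mpr (V.ι_image_le O)).trans subset_closure
    ext x
    change (x ∈ V.ι ''ᵁ W ∨ x ∉ closure (V : Set X)) ∧ x ∈ V.ι ''ᵁ O ↔
      x ∈ V.ι.base '' ((W : Set V.toScheme) ∩ O)
    rw [Set.image_inter V.ι.isOpenEmbedding.injective]
    exact ⟨fun ⟨hxWC, hxO⟩ => ⟨hxWC.resolve_right (not_not.mpr (hOV hxO)), hxO⟩,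
      fun ⟨hxW, hxO⟩ => ⟨Or.inl hxW, hxO⟩⟩
  exact (V.injective_toScheme_presheaf_map_iff _).mpr
    (injective_presheaf_map_of_eq hDO rfl _ _ (hX D (dense_union_compl_closure hVW) _))

open Scheme in
theorem SchemeSOnePrime.of_iSup_eq_top {X : Scheme} {ι : Type*} (𝒰 : ι → X.Opens)
    (hcov : iSup 𝒰 = ⊤) (h : ∀ i, SchemeSOnePrime (𝒰 i).toScheme) : SchemeSOnePrime X := by
  intro U hU V
  refine injective_presheaf_map_of_iSup_eq_top 𝒰 hcov inf_le_right fun i => ?_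
  have hUi : Dense ((𝒰 i).ι ⁻¹ᵁ U : Set (𝒰 i).toScheme) :=
    hU.preimage (𝒰 i).ι.isOpenEmbedding.isOpenMap
  exact injective_presheaf_map_of_eq ((𝒰 i).ι_image_preimage (U ⊓ V))
    ((𝒰 i).ι_image_preimage V) _ _
    (((𝒰 i).injective_toScheme_presheaf_map_iff _).mp (h i _ hUi ((𝒰 i).ι ⁻¹ᵁ V)))

theorem stmt_14_general (X : Scheme)
    {ι : Type*} (𝒰 : ι → X.Opens) (hcov : iSup 𝒰 = ⊤) :
    (SchemeSOnePrime X ↔ ∀ i, SchemeSOnePrime (𝒰 i).toScheme) ∧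
      (SchemeSOnePrime X → ∀ V : X.Opens, SchemeSOnePrime V.toScheme) :=
  ⟨⟨fun hX i => hX.restrict (𝒰 i), SchemeSOnePrime.of_iSup_eq_top 𝒰 hcov⟩,
    SchemeSOnePrime.restrict⟩

/-- Let `X` be a locally topologically Noetherian scheme and `X = ⋃ Uᵢ` an open cover.
Then `X` satisfies (S₁') iff each `Uᵢ` does; moreover if `X` satisfies (S₁') then so
does every open subscheme. -/
theorem stmt_14 (X : Scheme)
    (hNoeth : ∀ x : X, ∃ U : X.Opens, x ∈ U ∧ NoetherianSpace (U : Set X))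
    {ι : Type*} (𝒰 : ι → X.Opens) (hcov : iSup 𝒰 = ⊤) :
    (SchemeSOnePrime X ↔ ∀ i, SchemeSOnePrime (𝒰 i).toScheme) ∧
      (SchemeSOnePrime X → ∀ V : X.Opens, SchemeSOnePrime V.toScheme) :=
  stmt_14_general X 𝒰 hcov
end

section
/- Let X = Spec(A) be an affine scheme with finitely many minimal primes. Then X satisfies (S₁') (every dense open is schematically dense) if and only if every zerodivisor of A belongs to at least one minimal prime of A. -/
/-! If `a` is a zerodivisor lying in no minimal prime, `D(a)` contains every generic point and is
therefore dense, while any `b ≠ 0` with `a * b = 0` vanishes on `D(a)`. Conversely, if every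
zerodivisor lies in a minimal prime, prime avoidance puts the annihilator of `a ≠ 0` inside a
single minimal prime `q`. With finitely many irreducible components a dense open contains every
generic point, in particular `q`, so `a` cannot vanish at `q`. -/

theorem IsGenericPoint.mem_of_isOpen_of_dense {X : Type*} [TopologicalSpace X] {x : X}
    {Z U : Set X} (hX : (irreducibleComponents X).Finite) (hZ : Z ∈ irreducibleComponents X)
    (hx : IsGenericPoint x Z) (hU : IsOpen U) (hUd : Dense U) : x ∈ U := by
  -- `V` is the part of `Z` meeting no other component: open, and nonempty since `Z` is irreducible.
  set V := (⋃₀ (irreducibleComponents X \ {Z}))ᶜ with hV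
  have hVo : IsOpen V := by
    rw [hV, isOpen_compl_iff, Set.sUnion_eq_biUnion]
    exact hX.sdiff.isClosed_biUnion fun W hW ↦ isClosed_of_mem_irreducibleComponents W hW.1
  have hVZ : closure V = Z := closure_sUnion_irreducibleComponents_sdiff_singleton hX Z hZ
  have hVne : V.Nonempty := closure_nonempty_iff.mp (hVZ ▸ hZ.1.nonempty)
  obtain ⟨y, hyV, hyU⟩ := hUd.inter_open_nonempty V hVo hVne
  exact (hx.specializes (hVZ ▸ subset_closure hyV)).mem_open hU hyU

namespace PrimeSpectrum

variable {R : Type*} [CommSemiring R]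

theorem dense_of_forall_minimalPrimes_mem {U : Set (PrimeSpectrum R)}
    (h : ∀ q (hq : q ∈ minimalPrimes R), ⟨q, hq.1.1⟩ ∈ U) : Dense U := by
  refine dense_iff_inter_open.mpr fun W hW ⟨x, hxW⟩ ↦ ?_
  obtain ⟨q, hq, hqx⟩ := Ideal.exists_minimalPrimes_le (J := x.asIdeal) bot_le
  exact ⟨⟨q, hq.1.1⟩, ((le_iff_specializes _ x).mp hqx).mem_open hW hxW, h q hq⟩

theorem mem_of_isOpen_of_dense (hfin : (minimalPrimes R).Finite) {U : Set (PrimeSpectrum R)}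
    (hU : IsOpen U) (hUd : Dense U) {q : Ideal R} (hq : q ∈ minimalPrimes R) :
    ⟨q, hq.1.1⟩ ∈ U := by
  have hZ : zeroLocus q ∈ irreducibleComponents (PrimeSpectrum R) :=
    zeroLocus_minimalPrimes R ▸ ⟨q, hq, rfl⟩
  exact IsGenericPoint.mem_of_isOpen_of_dense (zeroLocus_minimalPrimes R ▸ hfin.image _) hZ
    (closure_singleton _) hU hUd

end PrimeSpectrum

theorem exists_mem_minimalPrimes_annihilator_le {A : Type*} [CommRing A]
    (hfin : (minimalPrimes A).Finite)
    (H : ∀ a : A, (∃ b : A, b ≠ 0 ∧ a * b = 0) → ∃ p ∈ minimalPrimes A, a ∈ p)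
    {a : A} (ha : a ≠ 0) : ∃ q ∈ minimalPrimes A, (A ∙ a).annihilator ≤ q := by
  refine (Ideal.subset_union_prime_finite hfin ⊥ ⊥ fun q hq _ _ ↦ hq.1.1).mp fun s hs ↦ ?_
  obtain ⟨q, hq, hsq⟩ := H s ⟨a, ha, (Submodule.mem_annihilator_span_singleton a s).mp hs⟩
  exact Set.mem_biUnion hq hsq

/-- Let `X = Spec A` be an affine scheme with finitely many minimal primes. Then `X`
satisfies (S₁') (every element vanishing on a dense open vanishes, i.e. every dense open
is schematically dense) if and only if every zerodivisor of `A` belongs to at least one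
minimal prime of `A`. -/
theorem stmt_15 {A : Type*} [CommRing A] (hfin : (minimalPrimes A).Finite) :
    (∀ U : Set (PrimeSpectrum A), IsOpen U → Dense U →
        ∀ a : A, (∀ p ∈ U, algebraMap A (Localization.AtPrime p.asIdeal) a = 0) → a = 0) ↔
      ∀ a : A, (∃ b : A, b ≠ 0 ∧ a * b = 0) → ∃ p ∈ minimalPrimes A, a ∈ p := by
  constructor
  · rintro hS a ⟨b, hb, hab⟩
    by_contra! ha
    refine hb (hS (PrimeSpectrum.basicOpen a) (PrimeSpectrum.basicOpen a).isOpen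
      (PrimeSpectrum.dense_of_forall_minimalPrimes_mem ha) b fun p hp ↦ ?_)
    exact (IsLocalization.map_eq_zero_iff p.asIdeal.primeCompl _ b).mpr ⟨⟨a, hp⟩, hab⟩
  · intro H U hU hUd a ha
    by_contra ha0
    obtain ⟨q, hq, hann⟩ := exists_mem_minimalPrimes_annihilator_le hfin H ha0
    have := hq.1.1
    obtain ⟨⟨s, hs⟩, hsa⟩ := (IsLocalization.map_eq_zero_iff q.primeCompl _ a).mp
      (ha _ (PrimeSpectrum.mem_of_isOpen_of_dense hfin hU hUd hq))
    exact hs (hann ((Submodule.mem_annihilator_span_singleton a s).mpr hsa))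
end

section
/- Let A be a complete topological ring which is I-adically complete and separated for a finitely generated ideal I, over the valuation ring 𝒪_K of a non-archimedean field with pseudouniformizer ϖ ∈ I. If there is a continuous adic surjection 𝒪_K⟨x₁,…,x_n⟩⟦y₁,…,y_m⟧ → A, then for every ideal of definition J of A containing ϖA, the quotient A/J is a finitely generated 𝒪_K/ϖ-algebra. -/
/-! Since `IP` is finitely generated, every element of the completion `P̂` of `P = O[x, y]` is
congruent to an element of `P` modulo `IP ^ N • P̂`. Because `ψ` is adic, `J` contains the image
of `IP ^ N • P̂` for large `N`, so `A ⧸ J` is a quotient of the polynomial ring `P`. -/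

open MvPolynomial

namespace AdicCompletion

variable {R : Type*} [CommRing R] {I : Ideal R}

theorem exists_sub_algebraMap_mem_map_pow (hI : I.FG) (n : ℕ) (x : AdicCompletion I R) :
    ∃ r : R, x - algebraMap R _ r ∈ (I ^ n).map (algebraMap R (AdicCompletion I R)) := by
  obtain ⟨r, hr⟩ := Submodule.mkQ_surjective _ (eval I R n x)
  refine ⟨r, ?_⟩
  rw [← Submodule.restrictScalars_mem R, ← Ideal.smul_top_eq_map, pow_smul_top_eq_ker_eval hI,
    LinearMap.mem_ker, map_sub, algebraMap_apply, eval_of,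
    Algebra.algebraMap_self, RingHom.id_apply, ← hr, sub_self]

theorem surjective_quotient_comp_algebraMap {S : Type*} [CommRing S] (hI : I.FG)
    {ψ : AdicCompletion I R →+* S} (hψ : Function.Surjective ψ) {J : Ideal S} {N : ℕ}
    (hN : ((I.map (algebraMap R (AdicCompletion I R))).map ψ) ^ N ≤ J) :
    Function.Surjective ((Ideal.Quotient.mk J).comp (ψ.comp (algebraMap R _))) := by
  intro a
  obtain ⟨b, rfl⟩ := Ideal.Quotient.mk_surjective a
  obtain ⟨x, rfl⟩ := hψ b
  obtain ⟨r, hr⟩ := exists_sub_algebraMap_mem_map_pow hI N x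
  refine ⟨r, (Ideal.Quotient.eq.mpr ?_).symm⟩
  rw [RingHom.comp_apply, ← map_sub]
  refine hN ?_
  rw [← Ideal.map_pow, ← Ideal.map_pow]
  exact Ideal.mem_map_of_mem ψ hr

end AdicCompletion

theorem stmt_18_general {O : Type*} [CommRing O]
    (ϖ : O)
    (n m : ℕ)
    -- `IP` is the ideal `(ϖ, y₁, …, y_m)` of the polynomial ring
    (IP : Ideal (MvPolynomial (Fin n ⊕ Fin m) O))
    (hIP : IP = Ideal.span
      ({C ϖ} ∪ Set.range fun j : Fin m => (X (Sum.inr j) : MvPolynomial (Fin n ⊕ Fin m) O)))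
    {A : Type*} [CommRing A] [Algebra O A]
    (I : Ideal A)
    -- a surjection from the `(ϖ, y)`-adic completion of the polynomial ring
    (ψ : AdicCompletion IP (MvPolynomial (Fin n ⊕ Fin m) O) →+* A)
    (hψsurj : Function.Surjective ψ)
    (hψO : ∀ c : O, ψ (algebraMap (MvPolynomial (Fin n ⊕ Fin m) O)
      (AdicCompletion IP (MvPolynomial (Fin n ⊕ Fin m) O)) (C c)) = algebraMap O A c)
    -- `ψ` is adic: the image of `IP` generates an ideal of definition of `A`
    (hadic : (∃ k : ℕ, I ^ k ≤ Ideal.map ψ (IP.map (algebraMap _ _))) ∧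
      ∃ l : ℕ, (Ideal.map ψ (IP.map (algebraMap _ _))) ^ l ≤ I)
    -- `J` is an ideal of definition of `A` containing `ϖ A`
    (J : Ideal A) (hJ1 : ∃ k : ℕ, I ^ k ≤ J) :
    Algebra.FiniteType O (A ⧸ J) := by
  obtain ⟨l, hl⟩ := hadic.2
  obtain ⟨k, hk⟩ := hJ1
  have hIP_fg : IP.FG :=
    hIP ▸ Submodule.fg_span ((Set.finite_singleton _).union (Set.finite_range _))
  have hpow : (Ideal.map ψ (IP.map (algebraMap _ _))) ^ (l * k) ≤ J :=
    (pow_mul _ l k).trans_le ((Ideal.pow_right_mono hl k).trans hk)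
  let φ : MvPolynomial (Fin n ⊕ Fin m) O →ₐ[O] A ⧸ J :=
    { toRingHom := (Ideal.Quotient.mk J).comp (ψ.comp (algebraMap _ _))
      commutes' := fun c => congrArg (Ideal.Quotient.mk J) (hψO c) }
  exact .of_surjective φ
    (AdicCompletion.surjective_quotient_comp_algebraMap hIP_fg hψsurj hpow)

/-- Let `A` be a ring, `I`-adically complete and separated for a finitely generated ideal
`I`, over a valuation ring `𝒪_K` with pseudouniformizer `ϖ ∈ I`. If there is a continuous
adic surjection `𝒪_K⟨x₁,…,x_n⟩⟦y₁,…,y_m⟧ → A` (the source being the `(ϖ, y)`-adic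
completion of the polynomial ring), then for every ideal of definition `J` of `A`
containing `ϖA`, the quotient `A/J` is a finitely generated `𝒪_K/ϖ`-algebra. -/
theorem stmt_18 {O : Type*} [CommRing O] [IsDomain O] [ValuationRing O]
    (ϖ : O) (hϖ0 : ϖ ≠ 0) (hϖ : ϖ ∈ IsLocalRing.maximalIdeal O)
    (n m : ℕ)
    -- `IP` is the ideal `(ϖ, y₁, …, y_m)` of the polynomial ring
    (IP : Ideal (MvPolynomial (Fin n ⊕ Fin m) O))
    (hIP : IP = Ideal.span
      ({C ϖ} ∪ Set.range fun j : Fin m => (X (Sum.inr j) : MvPolynomial (Fin n ⊕ Fin m) O)))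
    {A : Type*} [CommRing A] [Algebra O A]
    (I : Ideal A) (hIfg : I.FG) [IsAdicComplete I A]
    -- a surjection from the `(ϖ, y)`-adic completion of the polynomial ring
    (ψ : AdicCompletion IP (MvPolynomial (Fin n ⊕ Fin m) O) →+* A)
    (hψsurj : Function.Surjective ψ)
    (hψO : ∀ c : O, ψ (algebraMap (MvPolynomial (Fin n ⊕ Fin m) O)
      (AdicCompletion IP (MvPolynomial (Fin n ⊕ Fin m) O)) (C c)) = algebraMap O A c)
    -- `ψ` is adic: the image of `IP` generates an ideal of definition of `A`
    (hadic : (∃ k : ℕ, I ^ k ≤ Ideal.map ψ (IP.map (algebraMap _ _))) ∧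
      ∃ l : ℕ, (Ideal.map ψ (IP.map (algebraMap _ _))) ^ l ≤ I)
    -- `J` is an ideal of definition of `A` containing `ϖ A`
    (J : Ideal A) (hJ1 : ∃ k : ℕ, I ^ k ≤ J) (hJ2 : ∃ l : ℕ, J ^ l ≤ I)
    (hϖJ : algebraMap O A ϖ ∈ J) :
    Algebra.FiniteType O (A ⧸ J) :=
  stmt_18_general ϖ n m IP hIP I ψ hψsurj hψO hadic J hJ1
end
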